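/- Under the su(N) generator hypotheses, the Dirac matrices in the Dirac representation, and the Grassmann setup, with structure constants f a b c := −2·i·trace ((T a * T b − T b * T a) * T c), the following vanishing holds: for every 4×4 complex matrix Γ₀, every finite index type ι, every family Γ : ι → Matrix (Fin 4) (Fin 4) ℂ and every weight function w : ι → ℂ, Σ_{a,b,c : Fin (N^2−1)} Σ_{α : ι} f a b c · w α • ⟪Γ₀, T a⟫ * ⟪Γ α, T b⟫ * ⟪Γ α, T c⟫ = 0 in Λ. (In particular, f^{abc}·(ψ̄ T^a ψ)(ψ̄ T^b Γ_i ψ)(ψ̄ T^c Γ_i ψ) = 0 for each of the contracted Dirac structures Γ_i, by symmetry.) -/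

import Mathlib

noncomputable section

open Complex Matrix

/-- The Dirac γ-matrices in the Dirac representation. -/
def γm : Fin 4 → Matrix (Fin 4) (Fin 4) ℂ :=
  ![!![1,0,0,0; 0,1,0,0; 0,0,-1,0; 0,0,0,-1],
    !![0,0,0,1; 0,0,1,0; 0,-1,0,0; -1,0,0,0],
    !![0,0,0,-I; 0,0,I,0; 0,I,0,0; -I,0,0,0],
    !![0,0,1,0; 0,0,0,-1; -1,0,0,0; 0,1,0,0]]

/-- γ⁵ = i·γ⁰γ¹γ²γ³. -/
def γ5 : Matrix (Fin 4) (Fin 4) ℂ := I • (γm 0 * γm 1 * γm 2 * γm 3)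

/-- σ^{μν} = (i/2)[γ^μ, γ^ν]. -/
def σm (μ ν : Fin 4) : Matrix (Fin 4) (Fin 4) ℂ := (I / 2) • (γm μ * γm ν - γm ν * γm μ)

/-- The metric signs ε 0 = 1, ε 1 = ε 2 = ε 3 = −1 used to raise/lower indices. -/
def εs : Fin 4 → ℤ := ![1, -1, -1, -1]

/-- The totally antisymmetric Levi-Civita symbol on four indices,
normalized by ε₄ 0 1 2 3 = 1. -/
def ε4 (κ l μ ν : Fin 4) : ℤ :=
  Matrix.det (Matrix.of fun p q : Fin 4 => if ![κ, l, μ, ν] p = q then (1 : ℤ) else 0)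

/-- The Grassmann algebra generated by the 8N fermion components:
the exterior algebra of the direct sum of two copies of (Fin 4 × Fin N) → ℂ. -/
abbrev GrassAlg (N : ℕ) :=
  ExteriorAlgebra ℂ (((Fin 4 × Fin N) → ℂ) × ((Fin 4 × Fin N) → ℂ))

/-- ψ (A, i): the image in the Grassmann algebra of the standard basis vector
of the first summand indexed by (A, i). -/
def ψv (N : ℕ) (A : Fin 4) (i : Fin N) : GrassAlg N :=
  ExteriorAlgebra.ι ℂ (Pi.single (A, i) 1, 0)

/-- ψ̄ (A, i): the image in the Grassmann algebra of the standard basis vector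
of the second summand indexed by (A, i). -/
def ψbar (N : ℕ) (A : Fin 4) (i : Fin N) : GrassAlg N :=
  ExteriorAlgebra.ι ℂ (0, Pi.single (A, i) 1)

/-- The fermion bilinear B Γ i j = ∑_{A,B} Γ A B · ψ̄ (A,i) ψ (B,j). -/
def Bgr (N : ℕ) (Γ : Matrix (Fin 4) (Fin 4) ℂ) (i j : Fin N) : GrassAlg N :=
  ∑ A : Fin 4, ∑ B : Fin 4, Γ A B • (ψbar N A i * ψv N B j)

/-- ⟪Γ, X⟫ = ∑_{i,j} X i j · B Γ i j, the bilinear with Dirac structure Γ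
and color structure X. -/
def pairing (N : ℕ) (Γ : Matrix (Fin 4) (Fin 4) ℂ)
    (X : Matrix (Fin N) (Fin N) ℂ) : GrassAlg N :=
  ∑ i : Fin N, ∑ j : Fin N, X i j • Bgr N Γ i j

/-- ⟪Γ⟫ = ⟪Γ, 1⟫, the color-singlet bilinear. -/
def sing (N : ℕ) (Γ : Matrix (Fin 4) (Fin 4) ℂ) : GrassAlg N := pairing N Γ 1

/-- The antisymmetric structure constants f a b c = −2i·Tr([T a, T b]·T c). -/
def fConst {N : ℕ} (T : Fin (N ^ 2 - 1) → Matrix (Fin N) (Fin N) ℂ)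
    (a b c : Fin (N ^ 2 - 1)) : ℂ :=
  -2 * Complex.I * ((T a * T b - T b * T a) * T c).trace

/-! By cyclicity of the trace, `fConst T a b c` is antisymmetric in `b, c`. Each bilinear
`pairing N Γ X` is a combination of products of two generators, hence central in the exterior
algebra, so the last two factors of each summand commute. The summand is therefore antisymmetric
under `b ↔ c`, and the sum vanishes since the exterior algebra over `ℂ` has no `2`-torsion. -/

namespace ExteriorAlgebra

variable {R M : Type*} [CommRing R] [AddCommGroup M] [Module R M]

theorem ι_mul_ι_mul_ι_comm (x y z : M) : ι R x * ι R y * ι R z = ι R z * (ι R x * ι R y) := by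
  have anticomm : ∀ u v : M, ι R u * ι R v = -(ι R v * ι R u) := fun u v =>
    eq_neg_of_add_eq_zero_left (ι_add_mul_swap u v)
  rw [mul_assoc, anticomm y z, mul_neg, ← mul_assoc, anticomm x z]
  noncomm_ring

theorem ι_mul_ι_mem_center (x y : M) :
    ι R x * ι R y ∈ Subalgebra.center R (ExteriorAlgebra R M) := by
  refine Subalgebra.mem_center_iff.mpr fun b => ?_
  induction b using ExteriorAlgebra.induction with
  | algebraMap r => exact Algebra.commutes r _
  | ι z => exact (ι_mul_ι_mul_ι_comm x y z).symm
  | mul a b ha hb => rw [mul_assoc, hb, ← mul_assoc, ha, mul_assoc]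
  | add a b ha hb => rw [add_mul, mul_add, ha, hb]

end ExteriorAlgebra

theorem Bgr_mem_center (N : ℕ) (Γ : Matrix (Fin 4) (Fin 4) ℂ) (i j : Fin N) :
    Bgr N Γ i j ∈ Subalgebra.center ℂ (GrassAlg N) :=
  Subalgebra.sum_mem _ fun _ _ => Subalgebra.sum_mem _ fun _ _ =>
    Subalgebra.smul_mem _ (ExteriorAlgebra.ι_mul_ι_mem_center _ _) _

theorem pairing_mem_center (N : ℕ) (Γ : Matrix (Fin 4) (Fin 4) ℂ)
    (X : Matrix (Fin N) (Fin N) ℂ) :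
    pairing N Γ X ∈ Subalgebra.center ℂ (GrassAlg N) :=
  Subalgebra.sum_mem _ fun _ _ => Subalgebra.sum_mem _ fun _ _ =>
    Subalgebra.smul_mem _ (Bgr_mem_center N Γ _ _) _

theorem pairing_mul_comm (N : ℕ) (Γ Γ' : Matrix (Fin 4) (Fin 4) ℂ)
    (X X' : Matrix (Fin N) (Fin N) ℂ) :
    pairing N Γ X * pairing N Γ' X' = pairing N Γ' X' * pairing N Γ X :=
  Subalgebra.mem_center_iff.mp (pairing_mem_center N Γ' X') _

theorem Matrix.trace_commutator_mul_swap {n R : Type*} [Fintype n] [CommRing R]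
    (A B C : Matrix n n R) : ((A * C - C * A) * B).trace = -((A * B - B * A) * C).trace := by
  simp only [Matrix.sub_mul, Matrix.trace_sub]
  rw [Matrix.trace_mul_cycle A C B, Matrix.trace_mul_cycle C A B, Matrix.trace_mul_cycle B C A]
  ring

theorem fConst_swap {N : ℕ} (T : Fin (N ^ 2 - 1) → Matrix (Fin N) (Fin N) ℂ)
    (a b c : Fin (N ^ 2 - 1)) : fConst T a c b = -fConst T a b c := by
  rw [fConst, fConst, Matrix.trace_commutator_mul_swap]
  ring

theorem Fintype.sum_sum_eq_zero_of_antisymm {κ M : Type*} [Fintype κ] [AddCommGroup M]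
    [IsAddTorsionFree M] (g : κ → κ → M) (hg : ∀ b c, g c b = -g b c) :
    ∑ b, ∑ c, g b c = 0 := by
  refine self_eq_neg.mp ?_
  calc ∑ b, ∑ c, g b c = ∑ b, ∑ c, g c b := Finset.sum_comm
    _ = -∑ b, ∑ c, g b c := by
      simp only [← Finset.sum_neg_distrib]
      exact Finset.sum_congr rfl fun b _ => Finset.sum_congr rfl fun c _ => hg b c

theorem f_contraction_vanishes_general (N : ℕ)
    (T : Fin (N ^ 2 - 1) → Matrix (Fin N) (Fin N) ℂ)
    (Γ₀ : Matrix (Fin 4) (Fin 4) ℂ) (ι : Type) [Fintype ι]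
    (Γ : ι → Matrix (Fin 4) (Fin 4) ℂ) (w : ι → ℂ) :
    ∑ a, ∑ b, ∑ c, ∑ α : ι, (fConst T a b c * w α) •
        (pairing N Γ₀ (T a) * pairing N (Γ α) (T b) * pairing N (Γ α) (T c)) = 0 := by
  have : IsAddTorsionFree (GrassAlg N) := .of_module_rat _
  refine Finset.sum_eq_zero fun a _ => Fintype.sum_sum_eq_zero_of_antisymm _ fun b c => ?_
  rw [← Finset.sum_neg_distrib]
  refine Finset.sum_congr rfl fun α _ => ?_
  rw [fConst_swap, mul_assoc, pairing_mul_comm N (Γ α) (Γ α) (T c), ← mul_assoc, neg_mul, neg_smul]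

/-- **Vanishing of f-contracted cubic fermion combinations**:
f^{abc} (ψ̄ T^a Γ₀ ψ)(ψ̄ T^b Γ_α ψ)(ψ̄ T^c Γ_α ψ) = 0 for any contracted
family of Dirac structures Γ_α with weights w α. -/
theorem f_contraction_vanishes (N : ℕ) (hN : 2 ≤ N)
    (T : Fin (N ^ 2 - 1) → Matrix (Fin N) (Fin N) ℂ)
    (htr : ∀ a, (T a).trace = 0)
    (hherm : ∀ a, (T a)ᴴ = T a)
    (horth : ∀ a b, (T a * T b).trace = if a = b then (1 / 2 : ℂ) else 0)
    (Γ₀ : Matrix (Fin 4) (Fin 4) ℂ) (ι : Type) [Fintype ι]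
    (Γ : ι → Matrix (Fin 4) (Fin 4) ℂ) (w : ι → ℂ) :
    ∑ a, ∑ b, ∑ c, ∑ α : ι, (fConst T a b c * w α) •
        (pairing N Γ₀ (T a) * pairing N (Γ α) (T b) * pairing N (Γ α) (T c)) = 0 :=
  f_contraction_vanishes_general N T Γ₀ ι Γ w
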